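/- arXiv:1912.06791 — 2 statements merged into one kernel-verified Lean document; each statement's English description precedes it below -/
import Mathlib

section
/- Let Q be a probability kernel on X and π a probability measure satisfying the detailed balance condition with acceptance function α: for all bounded measurable f : X × X → ℝ, ∬ f(x,y) α(x,y) π(dx) Q(x, dy) = ∬ f(x,y) α(y,x) π(dy) Q(y, dx). Then the Metropolis–Hastings kernel K(x, A) = ∫_A α(x,y) Q(x, dy) + δ_x(A) ∫ (1 − α(x,y)) Q(x, dy) leaves π invariant: π(A) = ∫ K(x, A) dπ(x) for all measurable A. -/
open MeasureTheory ProbabilityTheory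
open scoped ENNReal

/-!
Integrating `K(·, A)` against `π` gives the accepted flow into `A` plus the rejection mass on `A`.
Detailed balance, tested against `f(x, y) = 1_A(y)`, turns the accepted flow into `A` into the
accepted flow out of `A`, `∫_A ∫ α(x, y) Q(x, dy) π(dx)`; together with the rejection mass on `A`
this is `∫_A Q(x, X) π(dx) = π(A)`.
-/

section

variable {X Y : Type*} [MeasurableSpace X] [MeasurableSpace Y]

theorem lintegral_ofReal_add_lintegral_ofReal_one_sub (μ : Measure Y) {f : Y → ℝ}
    (hf : Measurable f) (hf01 : ∀ y, f y ∈ Set.Icc (0 : ℝ) 1) :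
    ∫⁻ y, ENNReal.ofReal (f y) ∂μ + ∫⁻ y, ENNReal.ofReal (1 - f y) ∂μ = μ Set.univ := by
  rw [← lintegral_add_left hf.ennreal_ofReal, ← setLIntegral_one, Measure.restrict_univ]
  refine lintegral_congr fun y => ?_
  rw [← ENNReal.ofReal_add (hf01 y).1 (sub_nonneg.2 (hf01 y).2), add_sub_cancel,
    ENNReal.ofReal_one]

theorem lintegral_dirac_mul (π : Measure X) {A : Set X} (hA : MeasurableSet A) (f : X → ℝ≥0∞) :
    ∫⁻ x, Measure.dirac x A * f x ∂π = ∫⁻ x in A, f x ∂π := by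
  rw [← lintegral_indicator hA]
  refine lintegral_congr fun x => ?_
  by_cases hx : x ∈ A <;> simp [hx, Measure.dirac_apply' _ hA]

theorem lintegral_lintegral_ofReal_eq_ofReal_integral_integral (π : Measure X)
    [IsFiniteMeasure π] (Q : Kernel X Y) [IsFiniteKernel Q] {h : X → Y → ℝ} {C : ℝ}
    (hh : Measurable (Function.uncurry h)) (h0 : ∀ x y, 0 ≤ h x y) (hC : ∀ x y, h x y ≤ C) :
    ∫⁻ x, ∫⁻ y, ENNReal.ofReal (h x y) ∂Q x ∂π = ENNReal.ofReal (∫ x, ∫ y, h x y ∂Q x ∂π) := by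
  have hint : Integrable (Function.uncurry h) (π ⊗ₘ Q) :=
    .of_bound hh.aestronglyMeasurable C <| ae_of_all _ fun z =>
      (Real.norm_of_nonneg (h0 z.1 z.2)).trans_le (hC z.1 z.2)
  calc ∫⁻ x, ∫⁻ y, ENNReal.ofReal (h x y) ∂Q x ∂π
      = ∫⁻ z, ENNReal.ofReal (Function.uncurry h z) ∂(π ⊗ₘ Q) :=
        (Measure.lintegral_compProd hh.ennreal_ofReal).symm
    _ = ENNReal.ofReal (∫ z, Function.uncurry h z ∂(π ⊗ₘ Q)) :=
        (ofReal_integral_eq_lintegral_ofReal hint (ae_of_all _ fun z => h0 z.1 z.2)).symm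
    _ = ENNReal.ofReal (∫ x, ∫ y, h x y ∂Q x ∂π) := by rw [Measure.integral_compProd hint]; rfl

def DetailedBalance (Q : Kernel X X) (π : Measure X) (α : X → X → ℝ) : Prop :=
  ∀ f : X → X → ℝ, Measurable (Function.uncurry f) → (∃ M, ∀ x y, |f x y| ≤ M) →
    ∫ x, ∫ y, f x y * α x y ∂(Q x) ∂π = ∫ y, ∫ x, f x y * α y x ∂(Q y) ∂π

theorem DetailedBalance.lintegral_setLIntegral_ofReal_eq {Q : Kernel X X} {π : Measure X}
    {α : X → X → ℝ} [IsFiniteMeasure π] [IsFiniteKernel Q] (hdb : DetailedBalance Q π α)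
    (hα : Measurable (Function.uncurry α)) (hα01 : ∀ x y, α x y ∈ Set.Icc (0 : ℝ) 1)
    {A : Set X} (hA : MeasurableSet A) :
    ∫⁻ x, ∫⁻ y in A, ENNReal.ofReal (α x y) ∂Q x ∂π =
      ∫⁻ x in A, ∫⁻ y, ENNReal.ofReal (α x y) ∂Q x ∂π := by
  set χ : X → ℝ := A.indicator 1
  have hχ : Measurable χ := measurable_one.indicator hA
  have hχα_mem : ∀ a x y, χ a * α x y ∈ Set.Icc (0 : ℝ) 1 := fun a x y => by
    by_cases ha : a ∈ A <;> simp [χ, ha, hα01 x y]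
  calc ∫⁻ x, ∫⁻ y in A, ENNReal.ofReal (α x y) ∂Q x ∂π
      = ∫⁻ x, ∫⁻ y, ENNReal.ofReal (χ y * α x y) ∂Q x ∂π := by
        refine lintegral_congr fun x => ?_
        rw [← lintegral_indicator hA]
        refine lintegral_congr fun y => ?_
        by_cases hy : y ∈ A <;> simp [χ, hy]
    _ = ENNReal.ofReal (∫ x, ∫ y, χ y * α x y ∂Q x ∂π) :=
        lintegral_lintegral_ofReal_eq_ofReal_integral_integral π Q
          ((hχ.comp measurable_snd).mul hα) (fun x y => (hχα_mem y x y).1)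
          (fun x y => (hχα_mem y x y).2)
    _ = ENNReal.ofReal (∫ x, ∫ y, χ x * α x y ∂Q x ∂π) := by
        rw [hdb (fun _ y => χ y) (hχ.comp measurable_snd) ⟨1, fun x y => ?_⟩]
        by_cases hy : y ∈ A <;> simp [χ, hy]
    _ = ∫⁻ x, ∫⁻ y, ENNReal.ofReal (χ x * α x y) ∂Q x ∂π :=
        (lintegral_lintegral_ofReal_eq_ofReal_integral_integral π Q (h := fun x y => χ x * α x y)
          ((hχ.comp measurable_fst).mul hα) (fun x y => (hχα_mem x x y).1)
          (fun x y => (hχα_mem x x y).2)).symm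
    _ = ∫⁻ x in A, ∫⁻ y, ENNReal.ofReal (α x y) ∂Q x ∂π := by
        rw [← lintegral_indicator hA]
        refine lintegral_congr fun x => ?_
        by_cases hx : x ∈ A <;> simp [χ, hx]

end

theorem metropolisHastings_invariant_general {X : Type*} [MeasurableSpace X]
    (Q : Kernel X X) [IsMarkovKernel Q] (π : Measure X) (hπ : IsProbabilityMeasure π)
    (α : X → X → ℝ) (hα : Measurable (Function.uncurry α))
    (hα01 : ∀ x y, α x y ∈ Set.Icc (0 : ℝ) 1)
    (hdb : ∀ f : X → X → ℝ, Measurable (Function.uncurry f) → (∃ M, ∀ x y, |f x y| ≤ M) →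
      ∫ x, ∫ y, f x y * α x y ∂(Q x) ∂π = ∫ y, ∫ x, f x y * α y x ∂(Q y) ∂π)
    (K : Kernel X X)
    (hK : ∀ (x : X) (A : Set X), MeasurableSet A →
      K x A = (∫⁻ y in A, ENNReal.ofReal (α x y) ∂(Q x)) +
        Measure.dirac x A * ∫⁻ y, ENNReal.ofReal (1 - α x y) ∂(Q x)) :
    π.bind (K ·) = π := by
  ext A hA
  rw [Measure.bind_apply hA K.measurable.aemeasurable]
  calc ∫⁻ x, K x A ∂π
      = ∫⁻ x, (∫⁻ y in A, ENNReal.ofReal (α x y) ∂Q x) +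
          Measure.dirac x A * ∫⁻ y, ENNReal.ofReal (1 - α x y) ∂Q x ∂π :=
        lintegral_congr fun x => hK x A hA
    _ = ∫⁻ x in A, ∫⁻ y, ENNReal.ofReal (α x y) ∂Q x ∂π +
          ∫⁻ x in A, ∫⁻ y, ENNReal.ofReal (1 - α x y) ∂Q x ∂π := by
        rw [lintegral_add_left (hα.ennreal_ofReal.setLIntegral_kernel_prod_right hA),
          lintegral_dirac_mul π hA, DetailedBalance.lintegral_setLIntegral_ofReal_eq hdb hα hα01 hA]
    _ = ∫⁻ x in A, Q x Set.univ ∂π := by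
        rw [← lintegral_add_left hα.ennreal_ofReal.lintegral_kernel_prod_right]
        exact lintegral_congr fun x => lintegral_ofReal_add_lintegral_ofReal_one_sub (Q x)
          (hα.comp measurable_prodMk_left) (hα01 x)
    _ = π A := by simp

/-- If `π`, `Q`, `α` satisfy detailed balance, then the Metropolis–Hastings kernel
leaves `π` invariant. -/
theorem metropolisHastings_invariant {X : Type*} [MeasurableSpace X]
    (Q : Kernel X X) [IsMarkovKernel Q] (π : Measure X) (hπ : IsProbabilityMeasure π)
    (α : X → X → ℝ) (hα : Measurable (Function.uncurry α))
    (hα01 : ∀ x y, α x y ∈ Set.Icc (0 : ℝ) 1)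
    (hdb : ∀ f : X → X → ℝ, Measurable (Function.uncurry f) → (∃ M, ∀ x y, |f x y| ≤ M) →
      ∫ x, ∫ y, f x y * α x y ∂(Q x) ∂π = ∫ y, ∫ x, f x y * α y x ∂(Q y) ∂π)
    (K : Kernel X X) [IsMarkovKernel K]
    (hK : ∀ (x : X) (A : Set X), MeasurableSet A →
      K x A = (∫⁻ y in A, ENNReal.ofReal (α x y) ∂(Q x)) +
        Measure.dirac x A * ∫⁻ y, ENNReal.ofReal (1 - α x y) ∂(Q x)) :
    π.bind (K ·) = π :=
  metropolisHastings_invariant_general Q π hπ α hα hα01 hdb K hK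
end

section
/- Suppose π and Q(x,·) (for all x) are absolutely continuous with respect to a σ-finite measure ν on X, with densities p and q(x,·) respectively, both jointly measurable. Define R = {(x,y) : p(x)q(x,y) > 0 and p(y)q(y,x) > 0} and α(x,y) = min{1, p(y)q(y,x)/(p(x)q(x,y))} for (x,y) ∈ R and α(x,y) = 0 otherwise. Then the detailed balance condition holds: for all bounded measurable f, ∬ f(x,y) α(x,y) π(dx) Q(x,dy) = ∬ f(x,y) α(y,x) π(dy) Q(y,dx). -/
open MeasureTheory ProbabilityTheory Function

private lemma mh_key (a b : ℝ) :
    (if 0 < a ∧ 0 < b then min 1 (b / a) else 0) * a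
      = (if 0 < b ∧ 0 < a then min 1 (a / b) else 0) * b := by
  by_cases h : 0 < a ∧ 0 < b
  · have h' : 0 < b ∧ 0 < a := ⟨h.2, h.1⟩
    rw [if_pos h, if_pos h', min_mul_of_nonneg _ _ h.1.le, min_mul_of_nonneg _ _ h.2.le,
      one_mul, one_mul, div_mul_cancel₀ _ h.1.ne', div_mul_cancel₀ _ h.2.ne', min_comm]
  · have h' : ¬ (0 < b ∧ 0 < a) := fun hc => h ⟨hc.2, hc.1⟩
    rw [if_neg h, if_neg h', zero_mul, zero_mul]

private lemma mh_helper {X : Type*} [MeasurableSpace X]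
    (ν : Measure X) [SigmaFinite ν]
    (p : X → ℝ) (hp : Measurable p) (hp0 : ∀ x, 0 ≤ p x)
    (q : X → X → ℝ) (hq : Measurable (Function.uncurry q)) (hq0 : ∀ x y, 0 ≤ q x y)
    (π : Measure X) (hπ : IsProbabilityMeasure π)
    (hπν : π = ν.withDensity (fun x => ENNReal.ofReal (p x)))
    (Q : Kernel X X) [IsMarkovKernel Q]
    (hQν : ∀ x, Q x = ν.withDensity (fun y => ENNReal.ofReal (q x y)))
    (α : X → X → ℝ) (hαm : Measurable (Function.uncurry α))
    (hα1 : ∀ x y, |α x y| ≤ 1)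
    (hkey : ∀ x y, α x y * (p x * q x y) = α y x * (p y * q y x)) :
    ∀ f : X → X → ℝ, Measurable (Function.uncurry f) → (∃ M, ∀ x y, |f x y| ≤ M) →
      ∫ x, ∫ y, f x y * α x y ∂(Q x) ∂π = ∫ y, ∫ x, f x y * α y x ∂(Q y) ∂π := by
  rintro f hf ⟨M, hM⟩
  have hM' : ∀ x y, |f x y| ≤ |M| := fun x y => (hM x y).trans (le_abs_self M)
  -- reduce kernel integrals to ν-integrals against densities
  have hQint : ∀ (x : X) (g : X → ℝ), ∫ y, g y ∂(Q x) = ∫ y, q x y * g y ∂ν := by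
    intro x g
    have hqx : Measurable fun y => q x y := hq.comp measurable_prodMk_left
    rw [hQν x]
    refine Eq.trans (?_ : _ = ∫ y, (q x y).toNNReal • g y ∂ν) ?_
    · exact integral_withDensity_eq_integral_smul (f := fun y => (q x y).toNNReal)
        hqx.real_toNNReal g
    · exact integral_congr_ae (Filter.Eventually.of_forall fun y => by
        simp [NNReal.smul_def, Real.coe_toNNReal _ (hq0 x y)])
  have hπint : ∀ (g : X → ℝ), ∫ x, g x ∂π = ∫ x, p x * g x ∂ν := by
    intro g
    rw [hπν]
    refine Eq.trans (?_ : _ = ∫ x, (p x).toNNReal • g x ∂ν) ?_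
    · exact integral_withDensity_eq_integral_smul (f := fun x => (p x).toNNReal)
        hp.real_toNNReal g
    · exact integral_congr_ae (Filter.Eventually.of_forall fun x => by
        simp [NNReal.smul_def, Real.coe_toNNReal _ (hp0 x)])
  -- measurability pieces
  have hpq1 : Measurable (fun z : X × X => p z.1 * q z.1 z.2) :=
    (hp.comp measurable_fst).mul hq
  have hFm : Measurable (fun z : X × X => p z.1 * (q z.1 z.2 * (f z.1 z.2 * α z.1 z.2))) :=
    (hp.comp measurable_fst).mul (hq.mul (hf.mul hαm))
  -- the total mass computation
  have h1 : ∫⁻ z : X × X, ENNReal.ofReal (p z.1 * q z.1 z.2) ∂(ν.prod ν) = 1 := by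
    rw [lintegral_prod _ hpq1.ennreal_ofReal.aemeasurable]
    have hin : ∀ x, ∫⁻ y, ENNReal.ofReal (p x * q x y) ∂ν = ENNReal.ofReal (p x) := by
      intro x
      have hqx : Measurable fun y => q x y := hq.comp measurable_prodMk_left
      simp_rw [ENNReal.ofReal_mul (hp0 x)]
      rw [lintegral_const_mul _ hqx.ennreal_ofReal]
      have h2 : ∫⁻ y, ENNReal.ofReal (q x y) ∂ν = (Q x) Set.univ := by
        rw [hQν x, withDensity_apply _ MeasurableSet.univ, setLIntegral_univ]
      rw [h2, measure_univ, mul_one]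
    simp_rw [hin]
    have h3 : ∫⁻ x, ENNReal.ofReal (p x) ∂ν = π Set.univ := by
      rw [hπν, withDensity_apply _ MeasurableSet.univ, setLIntegral_univ]
    rw [h3, measure_univ]
  -- integrability of the dominating function
  have hg : Integrable (fun z : X × X => |M| * (p z.1 * q z.1 z.2)) (ν.prod ν) := by
    refine ⟨(measurable_const.mul hpq1).aestronglyMeasurable, ?_⟩
    rw [hasFiniteIntegral_iff_ofReal (Filter.Eventually.of_forall fun z => mul_nonneg (abs_nonneg M) (mul_nonneg (hp0 _) (hq0 _ _)))]
    simp_rw [ENNReal.ofReal_mul (abs_nonneg M)]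
    rw [lintegral_const_mul _ hpq1.ennreal_ofReal, h1, mul_one]
    exact ENNReal.ofReal_lt_top
  -- integrability of the full integrand
  have hF : Integrable (fun z : X × X => p z.1 * (q z.1 z.2 * (f z.1 z.2 * α z.1 z.2)))
      (ν.prod ν) := by
    refine hg.mono' hFm.aestronglyMeasurable (Filter.Eventually.of_forall fun z => ?_)
    rw [Real.norm_eq_abs, abs_mul, abs_mul, abs_mul, abs_of_nonneg (hp0 _),
      abs_of_nonneg (hq0 _ _)]
    have h4 : |M| * (p z.1 * q z.1 z.2) = p z.1 * (q z.1 z.2 * (|M| * 1)) := by ring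
    rw [h4]
    exact mul_le_mul_of_nonneg_left (mul_le_mul_of_nonneg_left
      (mul_le_mul (hM' _ _) (hα1 _ _) (abs_nonneg _) (abs_nonneg M)) (hq0 _ _)) (hp0 _)
  -- main computation
  simp_rw [hπint, hQint, ← integral_const_mul]
  have hpt : ∀ y x, p y * (q y x * (f x y * α y x)) = p x * (q x y * (f x y * α x y)) := by
    intro y x
    linear_combination (-(f x y)) * hkey x y
  calc ∫ x, ∫ y, p x * (q x y * (f x y * α x y)) ∂ν ∂ν
      = ∫ y, ∫ x, p x * (q x y * (f x y * α x y)) ∂ν ∂ν := integral_integral_swap hF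
    _ = ∫ y, ∫ x, p y * (q y x * (f x y * α y x)) ∂ν ∂ν := by
        refine integral_congr_ae (Filter.Eventually.of_forall fun y => ?_)
        exact integral_congr_ae (Filter.Eventually.of_forall fun x => (hpt y x).symm)

/-- With densities `p` and `q` w.r.t. a σ-finite measure `ν`, the standard
Metropolis–Hastings acceptance ratio `α` satisfies detailed balance. -/
theorem metropolisHastings_detailed_balance {X : Type*} [MeasurableSpace X]
    (ν : Measure X) [SigmaFinite ν]
    (p : X → ℝ) (hp : Measurable p) (hp0 : ∀ x, 0 ≤ p x)
    (q : X → X → ℝ) (hq : Measurable (Function.uncurry q)) (hq0 : ∀ x y, 0 ≤ q x y)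
    (π : Measure X) (hπ : IsProbabilityMeasure π)
    (hπν : π = ν.withDensity (fun x => ENNReal.ofReal (p x)))
    (Q : Kernel X X) [IsMarkovKernel Q]
    (hQν : ∀ x, Q x = ν.withDensity (fun y => ENNReal.ofReal (q x y))) :
    ∀ f : X → X → ℝ, Measurable (Function.uncurry f) → (∃ M, ∀ x y, |f x y| ≤ M) →
      ∫ x, ∫ y, f x y *
          (if 0 < p x * q x y ∧ 0 < p y * q y x
            then min 1 ((p y * q y x) / (p x * q x y)) else 0) ∂(Q x) ∂π
      = ∫ y, ∫ x, f x y *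
          (if 0 < p y * q y x ∧ 0 < p x * q x y
            then min 1 ((p x * q x y) / (p y * q y x)) else 0) ∂(Q y) ∂π := by
  set α : X → X → ℝ := fun x y =>
    if 0 < p x * q x y ∧ 0 < p y * q y x
      then min 1 ((p y * q y x) / (p x * q x y)) else 0 with hα
  have hpq1 : Measurable (fun z : X × X => p z.1 * q z.1 z.2) :=
    (hp.comp measurable_fst).mul hq
  have hpq2 : Measurable (fun z : X × X => p z.2 * q z.2 z.1) :=
    (hp.comp measurable_snd).mul (hq.comp measurable_swap)
  have hαm : Measurable (Function.uncurry α) := by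
    apply Measurable.ite
    · exact (measurableSet_lt measurable_const hpq1).inter
        (measurableSet_lt measurable_const hpq2)
    · exact measurable_const.min (hpq2.div hpq1)
    · exact measurable_const
  have hα1 : ∀ x y, |α x y| ≤ 1 := by
    intro x y
    simp only [hα]
    split
    · next h =>
      rw [abs_of_nonneg (le_min zero_le_one (div_nonneg h.2.le h.1.le))]
      exact min_le_left _ _
    · simp
  have hkey : ∀ x y, α x y * (p x * q x y) = α y x * (p y * q y x) := fun x y =>
    mh_key (p x * q x y) (p y * q y x)
  exact mh_helper ν p hp hp0 q hq hq0 π hπ hπν Q hQν α hαm hα1 hkey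
end
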